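/- Let Ω ⊆ ℂ be a domain. Suppose Ω satisfies (LHMD)_{2,η} for some η > 0: there exist constants C > 0 and r₀ ∈ (0, 1/e) such that for every a ∈ ∂Ω, every r ∈ (0, r₀), every u ∈ F_{a,r}, and every z ∈ Ω ∩ D(a,r), one has u(z) ≤ C·exp( −η·( log(1/|z−a|)/log log(1/|z−a|) − log(1/r)/log log(1/r) ) ). Then there exist constants β > 0, C′ > 0, ε ∈ (0,1) and r₁ ∈ (0, r₀) such that for every a ∈ ∂Ω, every r ∈ (0, r₁), every u ∈ F_{a,r}, and every z ∈ Ω with |z − a| = C′·r·(log(1/r))^{−β}, one has u(z) ≤ 1 − ε (i.e. Ω satisfies condition (Δ)_{2,β}). -/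

import Mathlib

/-! With `L = log (1 / r)` and `|z - a| = r L^(-β)` one has `log (1 / |z - a|) = L + β log L`,
and `x ↦ x / log x` grows by at least `β / 4` from `L` to `L + β log L` once `L ≥ max (e²) β`.
Taking `β` with `η β / 4 ≥ log (2 C)`, the `(LHMD)` bound at `z` is at most `1 / 2`. -/

open Metric Set

/-- A real function is harmonic on an open set `s ⊆ ℂ` iff it is continuous on
`s` and satisfies the circle mean-value property on every closed disc
contained in `s`. -/
def HarmonicOn (u : ℂ → ℝ) (s : Set ℂ) : Prop :=
  ContinuousOn u s ∧ ∀ c : ℂ, ∀ ρ : ℝ, 0 < ρ → closedBall c ρ ⊆ s →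
    u c = (1 / (2 * Real.pi)) *
      ∫ θ in (0 : ℝ)..(2 * Real.pi), u (c + ρ * Complex.exp (θ * Complex.I))

/-- The family `F_{a,r}` of competitors for the harmonic measure of
`∂D(a,r) ∩ Ω` in `Ω ∩ D(a,r)`. -/
def MemF (Ω : Set ℂ) (a : ℂ) (r : ℝ) (u : ℂ → ℝ) : Prop :=
  HarmonicOn u (Ω ∩ ball a r) ∧
  (∀ z ∈ Ω ∩ ball a r, u z ≤ 1) ∧
  (∀ ζ ∈ frontier Ω ∩ ball a r,
    Filter.limsup u (nhdsWithin ζ (Ω ∩ ball a r)) ≤ 0)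

open Real

theorem quarter_le_div_log_add_mul_log_sub {L β : ℝ} (hβ : 0 < β) (hβL : β ≤ L)
    (hlog : 2 ≤ log L) :
    β / 4 ≤ (L + β * log L) / log (L + β * log L) - L / log L := by
  set l := log L
  have hL : 0 < L := hβ.trans_le hβL
  have hl : 0 < l := by linarith
  set L' := L + β * l
  have hLL' : L ≤ L' := le_add_of_nonneg_right (mul_pos hβ hl).le
  have hL' : 0 < L' := hL.trans_le hLL'
  have hlogL' : log L' ≤ l * (1 + β / L) := by
    have h := log_le_sub_one_of_pos (div_pos hL' hL)
    rw [log_div hL'.ne' hL.ne'] at h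
    have : L' / L - 1 = l * (β / L) := by field_simp; ring
    linarith
  have hlogL'pos : 0 < log L' := hl.trans_le (log_le_log hL hLL')
  calc β / 4 ≤ β * L * (l - 1) / (l * (L + β)) := by
        rw [le_div_iff₀ (by positivity)]
        nlinarith [mul_pos hβ hL, mul_pos hβ hl]
    _ = L' / (l * (1 + β / L)) - L / l := by field_simp; ring
    _ ≤ L' / log L' - L / l := by gcongr

theorem log_one_div_mul_rpow_neg {r x : ℝ} (hr : 0 < r) (hx : 0 < x) (β : ℝ) :
    log (1 / (r * x ^ (-β))) = log (1 / r) + β * log x := by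
  rw [one_div, one_div, log_inv, log_inv, log_mul hr.ne' (rpow_pos_of_pos hx _).ne',
    log_rpow hx]
  ring

theorem mul_exp_neg_le_half {C t : ℝ} (hC : 0 < C) (ht : log (2 * C) ≤ t) :
    C * exp (-t) ≤ 1 / 2 := by
  calc C * exp (-t) ≤ C * exp (-log (2 * C)) := by gcongr
    _ = 1 / 2 := by
      rw [exp_neg, exp_log (by positivity)]
      field_simp

theorem exists_exponent_mul_exp_le_half {η C : ℝ} (hη : 0 < η) (hC : 0 < C) :
    ∃ β > 0, ∀ L, β ≤ L → 2 ≤ log L →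
      C * exp (-η * ((L + β * log L) / log (L + β * log L) - L / log L)) ≤ 1 / 2 := by
  refine ⟨4 * max (log (2 * C) / η) 1, by positivity, fun L hβL hlog => ?_⟩
  rw [neg_mul]
  refine mul_exp_neg_le_half hC ?_
  calc log (2 * C) = η * (log (2 * C) / η) := by field_simp
    _ ≤ η * (4 * max (log (2 * C) / η) 1 / 4) := by
      rw [mul_div_cancel_left₀ _ four_ne_zero]; gcongr; exact le_max_left _ _
    _ ≤ _ := by gcongr; exact quarter_le_div_log_add_mul_log_sub (by positivity) hβL hlog

theorem lt_log_one_div_of_lt_exp_neg {r M : ℝ} (hr : 0 < r) (hrM : r < exp (-M)) :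
    M < log (1 / r) := by
  rw [one_div, log_inv, lt_neg]
  exact (log_lt_iff_lt_exp hr).2 hrM

theorem stmt_10 (Ω : Set ℂ)
    (η C r₀ : ℝ) (hη : 0 < η) (hC : 0 < C)
    (hr₀ : r₀ ∈ Set.Ioo (0 : ℝ) (Real.exp 1)⁻¹)
    (hLHMD : ∀ a ∈ frontier Ω, ∀ r ∈ Set.Ioo (0 : ℝ) r₀, ∀ u : ℂ → ℝ,
      MemF Ω a r u → ∀ z ∈ Ω ∩ ball a r,
        u z ≤ C * Real.exp (-η *
          (Real.log (1 / dist z a) / Real.log (Real.log (1 / dist z a))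
            - Real.log (1 / r) / Real.log (Real.log (1 / r))))) :
    ∃ β > (0 : ℝ), ∃ C' > (0 : ℝ), ∃ ε ∈ Set.Ioo (0 : ℝ) 1,
      ∃ r₁ ∈ Set.Ioo (0 : ℝ) r₀,
        ∀ a ∈ frontier Ω, ∀ r ∈ Set.Ioo (0 : ℝ) r₁, ∀ u : ℂ → ℝ,
          MemF Ω a r u → ∀ z ∈ Ω,
            dist z a = C' * r * (Real.log (1 / r)) ^ (-β) → u z ≤ 1 - ε := by
  obtain ⟨β, hβ, hhalf⟩ := exists_exponent_mul_exp_le_half hη hC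
  set M := max (exp 2) β
  have hr₀pos := hr₀.1
  refine ⟨β, hβ, 1, one_pos, 1 / 2, by norm_num, min (r₀ / 2) (exp (-M)),
    ⟨by positivity, (min_le_left _ _).trans_lt (half_lt_self hr₀pos)⟩, ?_⟩
  rintro a ha r ⟨hr, hr₁⟩ u hu z hz hdist
  set L := log (1 / r)
  have hML : M < L := lt_log_one_div_of_lt_exp_neg hr (hr₁.trans_le (min_le_right _ _))
  have hexpL : exp 2 < L := (le_max_left _ _).trans_lt hML
  have hL1 : 1 < L := (one_lt_exp_iff.2 two_pos).trans hexpL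
  rw [one_mul] at hdist
  have hzr : dist z a < r := hdist ▸
    mul_lt_of_lt_one_right hr (rpow_lt_one_of_one_lt_of_neg hL1 (neg_lt_zero.2 hβ))
  have hrr₀ : r < r₀ := hr₁.trans_le ((min_le_left _ _).trans (half_le_self hr₀pos.le))
  have hu_le := hLHMD a ha r ⟨hr, hrr₀⟩ u hu z ⟨hz, mem_ball.2 hzr⟩
  rw [hdist, log_one_div_mul_rpow_neg hr (by linarith)] at hu_le
  have hlogL : 2 ≤ log L := ((lt_log_iff_exp_lt (by linarith)).2 hexpL).le
  linarith [hhalf L ((le_max_right _ _).trans hML.le) hlogL]
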